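/- arXiv:2311.12528 — 4 statements merged into one kernel-verified Lean document; each statement's English description precedes it below -/
import Mathlib

section
/- Let A : X → Y be an injective bounded linear operator between Hilbert spaces, let X_n ⊆ X be a finite-dimensional subspace with orthogonal projection P_{X_n}, and let Y_n = A(X_n) with orthogonal projection P_{Y_n}. Then the Moore-Penrose pseudoinverse of the composition A ∘ P_{X_n} is given by (A P_{X_n})† = A⁻¹ ∘ P_{Y_n}, i.e., for every y ∈ Y, (A P_{X_n})† y is the unique element x ∈ X_n with A x = P_{Y_n} y. -/
/-!
`A ∘ P_{Xₙ}` has range exactly `Yₙ = A(Xₙ)`, so its least-squares solutions are the `z` with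
`A (P_{Xₙ} z) = P_{Yₙ} y`. By injectivity of `A` these are the `z` with `P_{Xₙ} z = x`, where `x` is
the unique preimage of `P_{Yₙ} y` in `Xₙ`, and among them `x` has least norm because orthogonal
projections do not increase the norm.
-/

namespace Submodule

variable {𝕜 E : Type*} [RCLike 𝕜] [NormedAddCommGroup E] [InnerProductSpace 𝕜 E]

theorem forall_norm_sub_le_iff_eq_starProjection (K : Submodule 𝕜 E) [K.HasOrthogonalProjection]
    {y v : E} (hv : v ∈ K) : (∀ w ∈ K, ‖v - y‖ ≤ ‖w - y‖) ↔ v = K.starProjection y := by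
  have hbdd : BddBelow (Set.range fun w : K => ‖y - w‖) :=
    ⟨0, Set.forall_mem_range.2 fun _ => norm_nonneg _⟩
  simp only [norm_sub_rev _ y]
  constructor
  · intro hmin
    have hinf : ‖y - v‖ = ⨅ w : K, ‖y - w‖ :=
      le_antisymm (le_ciInf fun w => hmin w w.2) (ciInf_le hbdd ⟨v, hv⟩)
    exact (K.eq_starProjection_of_mem_of_inner_eq_zero hv
      ((K.norm_eq_iInf_iff_inner_eq_zero hv).1 hinf)).symm
  · rintro rfl w hw
    rw [starProjection_minimal]
    exact ciInf_le hbdd ⟨w, hw⟩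

theorem forall_norm_apply_sub_le_iff_eq_starProjection {α : Type*} (K : Submodule 𝕜 E)
    [K.HasOrthogonalProjection] {f : α → E} (hf : Set.range f = K) (y : E) (a : α) :
    (∀ b, ‖f a - y‖ ≤ ‖f b - y‖) ↔ f a = K.starProjection y := by
  have hfa : f a ∈ K := by rw [← SetLike.mem_coe, ← hf]; exact ⟨a, rfl⟩
  rw [← K.forall_norm_sub_le_iff_eq_starProjection hfa]
  simp only [← SetLike.mem_coe, ← hf, Set.forall_mem_range]

theorem range_comp_starProjection {F : Type*} [AddCommGroup F] [Module 𝕜 F]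
    (K : Submodule 𝕜 E) [K.HasOrthogonalProjection] (A : E →ₗ[𝕜] F) :
    Set.range (fun z => A (K.starProjection z)) = K.map A := by
  have hrange : Set.range K.starProjection = K := congrArg SetLike.coe K.range_starProjection
  rw [Set.range_comp' A, hrange, map_coe]

end Submodule

theorem moore_penrose_of_projected_forward_general
    {X Y : Type*} [NormedAddCommGroup X] [InnerProductSpace ℝ X]
    [NormedAddCommGroup Y] [InnerProductSpace ℝ Y]
    (A : X →L[ℝ] Y) (hA : Function.Injective A)
    (Xn : Submodule ℝ X) [FiniteDimensional ℝ Xn] :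
    ∀ y : Y, ∃! x : X,
      x ∈ Xn ∧ A x = (Submodule.orthogonalProjectionOnto (Xn.map (A : X →ₗ[ℝ] Y)) y : Y) ∧
      (∀ z : X, ‖A (Xn.subtypeL (Submodule.orthogonalProjectionOnto Xn x)) - y‖ ≤
                ‖A (Xn.subtypeL (Submodule.orthogonalProjectionOnto Xn z)) - y‖) ∧
      (∀ z : X, (∀ w : X, ‖A (Xn.subtypeL (Submodule.orthogonalProjectionOnto Xn z)) - y‖ ≤
                          ‖A (Xn.subtypeL (Submodule.orthogonalProjectionOnto Xn w)) - y‖) → ‖x‖ ≤ ‖z‖) := by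
  intro y
  set Yn := Xn.map (A : X →ₗ[ℝ] Y)
  simp only [Submodule.subtypeL_apply, Submodule.coe_orthogonalProjectionOnto_apply]
  have hrange : Set.range (fun z => A (Xn.starProjection z)) = Yn := by
    simpa only [ContinuousLinearMap.coe_coe] using Xn.range_comp_starProjection (A : X →ₗ[ℝ] Y)
  have hmin := Yn.forall_norm_apply_sub_le_iff_eq_starProjection hrange y
  obtain ⟨x, hxXn, hxA⟩ := Yn.starProjection_apply_mem y
  have hPx : Xn.starProjection x = x := Xn.starProjection_eq_self_iff.2 hxXn
  refine ⟨x, ⟨hxXn, hxA, (hmin x).2 (by rw [hPx]; exact hxA), fun z hz => ?_⟩, ?_⟩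
  · have hPz : Xn.starProjection z = x := hA (((hmin z).1 hz).trans hxA.symm)
    exact hPz ▸ Xn.norm_starProjection_apply_le z
  · rintro x' ⟨-, hx'A, -, -⟩
    exact hA (hx'A.trans hxA.symm)

/-- Theorem 4 of Aspri–Korolev–Scherzer: if `A` is injective, the Moore–Penrose inverse of
`A ∘ P_{Xₙ}` is `A⁻¹ ∘ P_{Yₙ}` where `Yₙ = A(Xₙ)`.  Concretely: for every `y`, there is a unique
`x ∈ Xₙ` with `A x = P_{Yₙ} y`, and this `x` is the minimum-norm minimizer of
`z ↦ ‖A (P_{Xₙ} z) - y‖`. -/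
theorem moore_penrose_of_projected_forward
    {X Y : Type*} [NormedAddCommGroup X] [InnerProductSpace ℝ X] [CompleteSpace X]
    [NormedAddCommGroup Y] [InnerProductSpace ℝ Y] [CompleteSpace Y]
    (A : X →L[ℝ] Y) (hA : Function.Injective A)
    (Xn : Submodule ℝ X) [FiniteDimensional ℝ Xn] :
    ∀ y : Y, ∃! x : X,
      x ∈ Xn ∧ A x = (Submodule.orthogonalProjectionOnto (Xn.map (A : X →ₗ[ℝ] Y)) y : Y) ∧
      (∀ z : X, ‖A (Xn.subtypeL (Submodule.orthogonalProjectionOnto Xn x)) - y‖ ≤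
                ‖A (Xn.subtypeL (Submodule.orthogonalProjectionOnto Xn z)) - y‖) ∧
      (∀ z : X, (∀ w : X, ‖A (Xn.subtypeL (Submodule.orthogonalProjectionOnto Xn z)) - y‖ ≤
                          ‖A (Xn.subtypeL (Submodule.orthogonalProjectionOnto Xn w)) - y‖) → ‖x‖ ≤ ‖z‖) :=
  moore_penrose_of_projected_forward_general A hA Xn
end

section
/- Let A : X → Y be a bounded linear operator with dense range between Hilbert spaces, and let Y_n ⊆ range(A) be a finite-dimensional subspace with orthogonal projection P_{Y_n}. Then the minimum-norm solution x_n of the projected equation P_{Y_n} A x = P_{Y_n} y (for exact data y = A x†, x† the minimum-norm solution) satisfies x_n = P_{A* Y_n} x†, where P_{A* Y_n} is the orthogonal projection onto the subspace A*(Y_n) ⊆ X. -/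
/-!
Because `⟪A* v, x⟫ = ⟪v, A x⟫`, the solutions of `P_{Yₙ} A x = P_{Yₙ} y` form the affine subspace
`x† + (A* Yₙ)ᗮ`. By Pythagoras, the element of least norm in an affine subspace `x₀ + Kᗮ` is
the orthogonal projection of `x₀` onto `K`.
-/

namespace Submodule

variable {𝕜 E F : Type*} [RCLike 𝕜]
  [NormedAddCommGroup E] [InnerProductSpace 𝕜 E] [NormedAddCommGroup F] [InnerProductSpace 𝕜 F]

theorem coe_orthogonalProjectionOnto_eq_iff_sub_mem_orthogonal (K : Submodule 𝕜 E)
    [K.HasOrthogonalProjection] {u v : E} :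
    (K.orthogonalProjectionOnto u : E) = K.orthogonalProjectionOnto v ↔ u - v ∈ Kᗮ := by
  rw [← orthogonalProjectionOnto_eq_zero_iff, map_sub, sub_eq_zero, Subtype.coe_inj]

theorem orthogonal_map_adjoint [CompleteSpace E] [CompleteSpace F] (A : E →L[𝕜] F)
    (U : Submodule 𝕜 F) : (U.map (A.adjoint : F →ₗ[𝕜] E))ᗮ = Uᗮ.comap (A : E →ₗ[𝕜] F) := by
  ext x
  simp [mem_orthogonal, ContinuousLinearMap.adjoint_inner_left]

theorem eq_starProjection_of_sub_mem_orthogonal_of_norm_le (K : Submodule 𝕜 E)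
    [K.HasOrthogonalProjection] {x₀ x : E} (hx : x - x₀ ∈ Kᗮ)
    (hmin : ∀ x' : E, x' - x₀ ∈ Kᗮ → ‖x‖ ≤ ‖x'‖) : x = K.starProjection x₀ := by
  set p := K.starProjection x₀
  have hp : p - x₀ ∈ Kᗮ := by
    simpa using Kᗮ.neg_mem (K.sub_starProjection_mem_orthogonal x₀)
  have hxp : x - p ∈ Kᗮ := by simpa using Kᗮ.sub_mem hx hp
  have hpyth : ‖x‖ * ‖x‖ = ‖p‖ * ‖p‖ + ‖x - p‖ * ‖x - p‖ := by
    simpa using norm_add_sq_eq_norm_sq_add_norm_sq_of_inner_eq_zero p (x - p)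
      (inner_right_of_mem_orthogonal (K.starProjection_apply_mem x₀) hxp)
  have hle : ‖x‖ ≤ ‖p‖ := hmin p hp
  have hxp_norm : ‖x - p‖ = 0 := by nlinarith [norm_nonneg x, norm_nonneg (x - p)]
  exact sub_eq_zero.mp (norm_eq_zero.mp hxp_norm)

end Submodule

theorem dual_least_squares_min_norm_solution_general
    {X Y : Type*} [NormedAddCommGroup X] [InnerProductSpace ℝ X] [CompleteSpace X]
    [NormedAddCommGroup Y] [InnerProductSpace ℝ Y] [CompleteSpace Y]
    (A : X →L[ℝ] Y)
    (Yn : Submodule ℝ Y) [FiniteDimensional ℝ Yn]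
    (y : Y) (xdag : X) (hxdag_sol : A xdag = y)
    (xn : X)
    (hxn_sol : (Submodule.orthogonalProjectionOnto Yn (A xn) : Y) = (Submodule.orthogonalProjectionOnto Yn y : Y))
    (hxn_min : ∀ x : X,
      (Submodule.orthogonalProjectionOnto Yn (A x) : Y) = (Submodule.orthogonalProjectionOnto Yn y : Y) → ‖xn‖ ≤ ‖x‖) :
    xn = (Submodule.orthogonalProjectionOnto (Yn.map (A.adjoint : Y →ₗ[ℝ] X)) xdag : X) := by
  have hsol : ∀ x : X, (Yn.orthogonalProjectionOnto (A x) : Y) = Yn.orthogonalProjectionOnto y ↔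
      x - xdag ∈ (Yn.map (A.adjoint : Y →ₗ[ℝ] X))ᗮ := fun x => by
    rw [Yn.coe_orthogonalProjectionOnto_eq_iff_sub_mem_orthogonal, Submodule.orthogonal_map_adjoint,
      Submodule.mem_comap, ContinuousLinearMap.coe_coe, map_sub, hxdag_sol]
  exact Submodule.eq_starProjection_of_sub_mem_orthogonal_of_norm_le _ ((hsol xn).1 hxn_sol)
    fun x hx => hxn_min x ((hsol x).2 hx)

/-- Dual least squares: if `A` has dense range and `Yₙ ⊆ range A` is finite-dimensional, then the
minimum-norm solution `xₙ` of the projected equation `P_{Yₙ} A x = P_{Yₙ} y` (with exact data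
`y = A x†`, `x†` the minimum-norm solution) satisfies `xₙ = P_{A*Yₙ} x†`. -/
theorem dual_least_squares_min_norm_solution
    {X Y : Type*} [NormedAddCommGroup X] [InnerProductSpace ℝ X] [CompleteSpace X]
    [NormedAddCommGroup Y] [InnerProductSpace ℝ Y] [CompleteSpace Y]
    (A : X →L[ℝ] Y) (hrange : DenseRange A)
    (Yn : Submodule ℝ Y) [FiniteDimensional ℝ Yn] (hYn : Yn ≤ LinearMap.range (A : X →ₗ[ℝ] Y))
    (y : Y) (xdag : X) (hxdag_sol : A xdag = y)
    (hxdag_min : ∀ x : X, A x = y → ‖xdag‖ ≤ ‖x‖)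
    (xn : X)
    (hxn_sol : (Submodule.orthogonalProjectionOnto Yn (A xn) : Y) = (Submodule.orthogonalProjectionOnto Yn y : Y))
    (hxn_min : ∀ x : X,
      (Submodule.orthogonalProjectionOnto Yn (A x) : Y) = (Submodule.orthogonalProjectionOnto Yn y : Y) → ‖xn‖ ≤ ‖x‖) :
    xn = (Submodule.orthogonalProjectionOnto (Yn.map (A.adjoint : Y →ₗ[ℝ] X)) xdag : X) :=
  dual_least_squares_min_norm_solution_general A Yn y xdag hxdag_sol xn hxn_sol hxn_min
end

section
/- Let {x̂ⁱ}_{i∈ℕ} be an orthonormal basis of a Hilbert space X and x_true ∈ X with Σ_{i=1}^∞ |⟨x_true, x̂ⁱ⟩| < ∞ (ℓ¹ coefficients). Let A : X → Y be bounded linear and ŷⁱ := A x̂ⁱ. Suppose for each n and i ≥ n+1 the expansion P_{Y_n} ŷⁱ = Σ_{j=1}^n β_j^{i,n} ŷʲ satisfies Σ_{j=1}^n (β_j^{i,n})² ≤ C uniformly in i and n. Then the minimum-norm solutions x_n of A P_{X_n} x = A x_true are bounded uniformly in n: ‖x_n‖ ≤ M for some M independent of n. -/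
/-!
Write `cᵢ = ⟪x_true, x̂ⁱ⟫` and `Pₙ` for the orthogonal projection onto `Yₙ = A Xₙ`. Every
`Pₙ ŷⁱ` has a preimage `uᵢⁿ` of norm at most `max 1 √C`: for `i < n` it is `x̂ⁱ` itself, and for
`i ≥ n` it is `∑ⱼ βⱼ x̂ʲ`, whose norm is `(∑ⱼ βⱼ²)^{1/2}` by orthonormality. Applying `Pₙ A` to
the expansion `x_true = ∑ cᵢ x̂ⁱ` gives `A xₙ = ∑ cᵢ A uᵢⁿ`; the series `∑ cᵢ uᵢⁿ` converges
absolutely, so by injectivity `xₙ = ∑ cᵢ uᵢⁿ` and `‖xₙ‖ ≤ max 1 √C · ∑ |cᵢ|`.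
-/

open RealInnerProductSpace

theorem Orthonormal.norm_sum_smul_sq {ι 𝕜 E : Type*} [RCLike 𝕜] [NormedAddCommGroup E]
    [InnerProductSpace 𝕜 E] {v : ι → E} (hv : Orthonormal 𝕜 v) (l : ι → 𝕜) (s : Finset ι) :
    ‖∑ i ∈ s, l i • v i‖ ^ 2 = ∑ i ∈ s, ‖l i‖ ^ 2 := by
  rw [← RCLike.ofReal_inj (K := 𝕜)]
  push_cast
  rw [← inner_self_eq_norm_sq_to_K, hv.inner_sum]
  simp only [RCLike.conj_mul]

theorem Orthonormal.hasSum_inner_smul {ι E : Type*} [NormedAddCommGroup E]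
    [InnerProductSpace ℝ E] [CompleteSpace E] {v : ι → E} (hv : Orthonormal ℝ v)
    (hsp : ⊤ ≤ (Submodule.span ℝ (Set.range v)).topologicalClosure) (x : E) :
    HasSum (fun i => ⟪x, v i⟫ • v i) x := by
  simpa [HilbertBasis.repr_apply_apply, real_inner_comm] using
    (HilbertBasis.mk hv hsp).hasSum_repr x

theorem HasSum.norm_le_tsum_abs_mul {ι E : Type*} [NormedAddCommGroup E] [NormedSpace ℝ E]
    {c : ι → ℝ} {u : ι → E} {s : E} {K : ℝ} (hs : HasSum (fun i => c i • u i) s)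
    (hc : Summable fun i => |c i|) (hu : ∀ i, ‖u i‖ ≤ K) :
    ‖s‖ ≤ (∑' i, |c i|) * K :=
  hs.norm_le_of_bounded (hc.hasSum.mul_right K) fun i => by
    rw [norm_smul, Real.norm_eq_abs]
    exact mul_le_mul_of_nonneg_left (hu i) (abs_nonneg _)

theorem ContinuousLinearMap.hasSum_smul_of_hasSum_map {ι E F : Type*} [NormedAddCommGroup E]
    [NormedSpace ℝ E] [CompleteSpace E] [NormedAddCommGroup F] [NormedSpace ℝ F]
    (A : E →L[ℝ] F) (hA : Function.Injective A) {c : ι → ℝ} {u : ι → E} {x : E} {K : ℝ}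
    (hc : Summable fun i => |c i|) (hu : ∀ i, ‖u i‖ ≤ K)
    (hAx : HasSum (fun i => c i • A (u i)) (A x)) :
    HasSum (fun i => c i • u i) x := by
  have hsum : Summable fun i => c i • u i :=
    .of_norm_bounded (hc.mul_right K) fun i => by
      rw [norm_smul, Real.norm_eq_abs]
      exact mul_le_mul_of_nonneg_left (hu i) (abs_nonneg _)
  have hA_tsum : A (∑' i, c i • u i) = A x :=
    (by simpa only [map_smul] using hsum.hasSum.mapL A : HasSum _ _).unique hAx
  exact hA hA_tsum ▸ hsum.hasSum

theorem exists_preimage_starProjection_norm_le {X Y : Type*} [NormedAddCommGroup X]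
    [InnerProductSpace ℝ X] [NormedAddCommGroup Y] [InnerProductSpace ℝ Y] (A : X →L[ℝ] Y)
    {v : ℕ → X} (hv : Orthonormal ℝ v) {n : ℕ} {V : Submodule ℝ X}
    [(V.map (A : X →ₗ[ℝ] Y)).HasOrthogonalProjection] (hV : ∀ i < n, v i ∈ V) {C : ℝ}
    (hβ : ∀ i, n ≤ i → ∃ β : Fin n → ℝ,
      (V.map (A : X →ₗ[ℝ] Y)).starProjection (A (v i)) = ∑ j, β j • A (v j) ∧
        ∑ j, β j ^ 2 ≤ C)
    (i : ℕ) :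
    ∃ u, A u = (V.map (A : X →ₗ[ℝ] Y)).starProjection (A (v i)) ∧ ‖u‖ ≤ max 1 √C := by
  rcases lt_or_ge i n with hi | hi
  · refine ⟨v i, (Submodule.starProjection_eq_self_iff.mpr
      (Submodule.mem_map_of_mem (hV i hi))).symm, ?_⟩
    rw [hv.norm_eq_one]
    exact le_max_left _ _
  · obtain ⟨β, hPβ, hβC⟩ := hβ i hi
    refine ⟨∑ j, β j • v j, by simp [hPβ], ?_⟩
    calc ‖∑ j, β j • v j‖ = √(∑ j, β j ^ 2) := by
          rw [← Real.sqrt_sq (norm_nonneg _)]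
          simpa using congrArg Real.sqrt ((hv.comp _ Fin.val_injective).norm_sum_smul_sq β .univ)
      _ ≤ √C := Real.sqrt_le_sqrt hβC
      _ ≤ max 1 √C := le_max_right _ _

theorem uniform_boundedness_of_projected_min_norm_solutions_general
    {X Y : Type*} [NormedAddCommGroup X] [InnerProductSpace ℝ X] [CompleteSpace X]
    [NormedAddCommGroup Y] [InnerProductSpace ℝ Y]
    (A : X →L[ℝ] Y) (hA : Function.Injective A)
    (v : ℕ → X) (hv : Orthonormal ℝ v)
    (hbasis : (Submodule.span ℝ (Set.range v)).topologicalClosure = ⊤)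
    (xtrue : X) (hl1 : Summable fun i => |⟪xtrue, v i⟫|)
    (Xn : ℕ → Submodule ℝ X) [∀ n, FiniteDimensional ℝ (Xn n)]
    (hXn : ∀ n, Xn n = Submodule.span ℝ (Set.range fun i : Fin n => v i))
    (Cst : ℝ)
    (hβ : ∀ n : ℕ, ∀ i : ℕ, n ≤ i → ∃ β : Fin n → ℝ,
      (Submodule.orthogonalProjectionOnto ((Xn n).map (A : X →ₗ[ℝ] Y)) (A (v i)) : Y) =
        ∑ j, β j • A (v (j : ℕ)) ∧
      ∑ j, (β j) ^ 2 ≤ Cst)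
    (xs : ℕ → X)
    (hxs_sol : ∀ n, A (xs n) =
      (Submodule.orthogonalProjectionOnto ((Xn n).map (A : X →ₗ[ℝ] Y)) (A xtrue) : Y)) :
    ∃ M : ℝ, ∀ n, ‖xs n‖ ≤ M := by
  refine ⟨(∑' i, |⟪xtrue, v i⟫|) * max 1 √Cst, fun n => ?_⟩
  have hvXn : ∀ i < n, v i ∈ Xn n := fun i hi => hXn n ▸ Submodule.subset_span ⟨⟨i, hi⟩, rfl⟩
  choose u hAu hu using exists_preimage_starProjection_norm_le A hv hvXn (hβ n)
  have hAxs : HasSum (fun i => ⟪xtrue, v i⟫ • A (u i)) (A (xs n)) := by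
    simpa [hAu, hxs_sol] using (hv.hasSum_inner_smul hbasis.ge xtrue).mapL
      (((Xn n).map (A : X →ₗ[ℝ] Y)).starProjection ∘L A)
  exact (A.hasSum_smul_of_hasSum_map hA hl1 hu hAxs).norm_le_tsum_abs_mul hl1 hu

/-- Theorem 11 of Aspri–Korolev–Scherzer: if the ground truth has ℓ¹ coefficients in the
orthonormal basis `{x̂ⁱ}` and the expansion coefficients `β` of `P_{Yₙ} ŷⁱ` (for `i ≥ n`) are
uniformly ℓ²-bounded, then the minimum-norm solutions `xₙ = A⁻¹ P_{Yₙ} A x_true` of the projected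
equations `A P_{Xₙ} x = A x_true` are uniformly bounded in norm. -/
theorem uniform_boundedness_of_projected_min_norm_solutions
    {X Y : Type*} [NormedAddCommGroup X] [InnerProductSpace ℝ X] [CompleteSpace X]
    [NormedAddCommGroup Y] [InnerProductSpace ℝ Y] [CompleteSpace Y]
    (A : X →L[ℝ] Y) (hA : Function.Injective A)
    (v : ℕ → X) (hv : Orthonormal ℝ v)
    (hbasis : (Submodule.span ℝ (Set.range v)).topologicalClosure = ⊤)
    (xtrue : X) (hl1 : Summable fun i => |⟪xtrue, v i⟫|)
    (Xn : ℕ → Submodule ℝ X) [∀ n, FiniteDimensional ℝ (Xn n)]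
    (hXn : ∀ n, Xn n = Submodule.span ℝ (Set.range fun i : Fin n => v i))
    (Cst : ℝ) (hCst : 0 < Cst)
    (hβ : ∀ n : ℕ, ∀ i : ℕ, n ≤ i → ∃ β : Fin n → ℝ,
      (Submodule.orthogonalProjectionOnto ((Xn n).map (A : X →ₗ[ℝ] Y)) (A (v i)) : Y) =
        ∑ j, β j • A (v (j : ℕ)) ∧
      ∑ j, (β j) ^ 2 ≤ Cst)
    (xs : ℕ → X)
    (hxs_mem : ∀ n, xs n ∈ Xn n)
    (hxs_sol : ∀ n, A (xs n) =
      (Submodule.orthogonalProjectionOnto ((Xn n).map (A : X →ₗ[ℝ] Y)) (A xtrue) : Y)) :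
    ∃ M : ℝ, ∀ n, ‖xs n‖ ≤ M :=
  uniform_boundedness_of_projected_min_norm_solutions_general A hA v hv hbasis xtrue hl1 Xn hXn Cst
    hβ xs hxs_sol
end

section
/- Let X be a Hilbert space, J : X → [0, +∞] proper, convex, lower semicontinuous with finite-dimensional kernel N := ker(J), and suppose J is coercive on the quotient X/N. Let T : X → Y be bounded linear with ker(T) ∩ N = {0}. Then the functional x ↦ (1/2)‖T x − y‖² + α J(x) (α > 0) attains its minimum on X. -/
open scoped ENNReal
open Filter Topology Metric Set Bornology

/-!
The functional is convex and lower semicontinuous, and its finite sublevel sets are bounded: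
the penalty bounds the distance to `N`, the data term bounds `T x`, and `T` is bounded below on
the finite-dimensional space `N` because `ker T ∩ N = 0`. The sets
`{F ≤ inf F + 1/(k+1)}` therefore form a decreasing sequence of nonempty closed convex bounded
sets, and in a Hilbert space such a sequence has a common point: by the parallelogram law the
minimal-norm points of the sets form a Cauchy sequence.
-/

section ConvexENNReal

variable {E : Type*} [AddCommGroup E] [Module ℝ E]

/-- `ConvexOn` does not apply here: `ℝ≥0∞` is not a module over `ℝ`. -/
def ConvexENNReal (F : E → ℝ≥0∞) : Prop :=
  ∀ x z : E, ∀ a b : ℝ, 0 ≤ a → 0 ≤ b → a + b = 1 →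
    F (a • x + b • z) ≤ ENNReal.ofReal a * F x + ENNReal.ofReal b * F z

variable {F G : E → ℝ≥0∞}

lemma ConvexENNReal.add (hF : ConvexENNReal F) (hG : ConvexENNReal G) : ConvexENNReal (F + G) :=
  fun x z a b ha hb hab => (add_le_add (hF x z a b ha hb hab) (hG x z a b ha hb hab)).trans_eq
    (by simp only [Pi.add_apply]; ring)

lemma ConvexENNReal.const_mul (hF : ConvexENNReal F) (c : ℝ≥0∞) :
    ConvexENNReal fun x => c * F x :=
  fun x z a b ha hb hab => (mul_le_mul_right (hF x z a b ha hb hab) c).trans_eq (by ring)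

lemma ConvexENNReal.convex_setOf_le (hF : ConvexENNReal F) (c : ℝ≥0∞) :
    Convex ℝ {x | F x ≤ c} := by
  intro u hu v hv a b ha hb hab
  calc F (a • u + b • v) ≤ ENNReal.ofReal a * F u + ENNReal.ofReal b * F v :=
        hF u v a b ha hb hab
    _ ≤ ENNReal.ofReal a * c + ENNReal.ofReal b * c := by gcongr <;> assumption
    _ = c := by rw [← add_mul, ← ENNReal.ofReal_add ha hb, hab, ENNReal.ofReal_one, one_mul]

lemma ConvexOn.convexENNReal_ofReal {f : E → ℝ} (hf : ConvexOn ℝ univ f) :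
    ConvexENNReal fun x => ENNReal.ofReal (f x) := by
  intro x z a b ha hb hab
  calc ENNReal.ofReal (f (a • x + b • z)) ≤ ENNReal.ofReal (a * f x + b * f z) :=
        ENNReal.ofReal_le_ofReal (hf.2 (mem_univ x) (mem_univ z) ha hb hab)
    _ ≤ ENNReal.ofReal (a * f x) + ENNReal.ofReal (b * f z) := ENNReal.ofReal_add_le
    _ = _ := by rw [ENNReal.ofReal_mul ha, ENNReal.ofReal_mul hb]

end ConvexENNReal

section Hilbert

variable {E : Type*} [NormedAddCommGroup E] [InnerProductSpace ℝ E]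

lemma norm_sub_sq_le_of_le_norm_midpoint {u v : E} {δ : ℝ} (hδ : 0 ≤ δ)
    (h : δ ≤ ‖midpoint ℝ u v‖) : ‖u - v‖ ^ 2 ≤ 2 * ‖u‖ ^ 2 + 2 * ‖v‖ ^ 2 - 4 * δ ^ 2 := by
  have hmid : ‖u + v‖ = 2 * ‖midpoint ℝ u v‖ := by
    rw [midpoint_eq_smul_add, norm_smul]
    norm_num
    ring
  have hδ2 : δ ^ 2 ≤ ‖midpoint ℝ u v‖ ^ 2 := pow_le_pow_left₀ hδ h 2
  have := parallelogram_law_with_norm ℝ u v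
  nlinarith

lemma Convex.exists_mem_forall_norm_le [CompleteSpace E] {K : Set E} (hK : Convex ℝ K)
    (hne : K.Nonempty) (hcl : IsClosed K) : ∃ v ∈ K, ∀ w ∈ K, ‖v‖ ≤ ‖w‖ := by
  obtain ⟨v, hv, hmin⟩ := exists_norm_eq_iInf_of_complete_convex hne hcl.isComplete hK 0
  refine ⟨v, hv, fun w hw => ?_⟩
  have := ciInf_le ⟨0, forall_mem_range.2 fun (w : K) => norm_nonneg ((0 : E) - w)⟩
    (⟨w, hw⟩ : K)
  simp only [zero_sub, norm_neg] at hmin this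
  exact hmin ▸ this

theorem exists_mem_iInter_of_antitone_convex [CompleteSpace E] {C : ℕ → Set E}
    (hanti : Antitone C) (hne : ∀ k, (C k).Nonempty) (hcl : ∀ k, IsClosed (C k))
    (hconv : ∀ k, Convex ℝ (C k)) (hbdd : IsBounded (C 0)) : (⋂ k, C k).Nonempty := by
  choose xs hxs hmin using fun k => (hconv k).exists_mem_forall_norm_le (hne k) (hcl k)
  have hmono : Monotone fun k => ‖xs k‖ := fun k l hkl => hmin k _ (hanti hkl (hxs l))
  obtain ⟨B, hB⟩ := hbdd.exists_norm_le
  have hbddA : BddAbove (range fun k => ‖xs k‖) :=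
    ⟨B, forall_mem_range.2 fun k => hB _ (hanti (Nat.zero_le k) (hxs k))⟩
  set D := ⨆ k, ‖xs k‖
  have hD : ∀ k, ‖xs k‖ ^ 2 ≤ D ^ 2 := fun k =>
    pow_le_pow_left₀ (norm_nonneg _) (le_ciSup hbddA k) 2
  have hdist : ∀ n k l, n ≤ k → n ≤ l →
      dist (xs k) (xs l) ≤ √(4 * (D ^ 2 - ‖xs n‖ ^ 2)) := by
    intro n k l hk hl
    have hmid := (hconv n).midpoint_mem (hanti hk (hxs k)) (hanti hl (hxs l))
    have := norm_sub_sq_le_of_le_norm_midpoint (norm_nonneg _) (hmin n _ hmid)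
    rw [dist_eq_norm]
    apply Real.le_sqrt_of_sq_le
    linarith [hD k, hD l]
  have hlim : Tendsto (fun n => √(4 * (D ^ 2 - ‖xs n‖ ^ 2))) atTop (𝓝 0) := by
    have := ((tendsto_const_nhds (x := D ^ 2)).sub
      ((tendsto_atTop_ciSup hmono hbddA).pow 2)).const_mul 4 |>.sqrt
    simpa [D] using this
  obtain ⟨x, hx⟩ := cauchySeq_tendsto_of_complete
    (cauchySeq_of_le_tendsto_0 _ (fun k l n hk hl => hdist n k l hk hl) hlim)
  exact ⟨x, mem_iInter.2 fun k => (hcl k).mem_of_tendsto hx <|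
    (eventually_ge_atTop k).mono fun l hl => hanti hl (hxs l)⟩

theorem ConvexENNReal.exists_forall_le [CompleteSpace E] {F : E → ℝ≥0∞} (hF : ConvexENNReal F)
    (hlsc : LowerSemicontinuous F) (hbdd : ∀ c ≠ ⊤, IsBounded {x | F x ≤ c})
    (hfin : ∃ x, F x ≠ ⊤) : ∃ x, ∀ z, F x ≤ F z := by
  set m := ⨅ x, F x
  have hm : m ≠ ⊤ := let ⟨x, hx⟩ := hfin; ne_top_of_le_ne_top hx (iInf_le F x)
  set ε : ℕ → ℝ≥0∞ := fun k => ((k + 1 : ℕ) : ℝ≥0∞)⁻¹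
  have hε : Tendsto ε atTop (𝓝 0) :=
    ENNReal.tendsto_inv_nat_nhds_zero.comp (tendsto_add_atTop_nat 1)
  have hne : ∀ k, {x | F x ≤ m + ε k}.Nonempty := fun k =>
    let ⟨x, hx⟩ := iInf_lt_iff.1 (ENNReal.lt_add_right hm (by simp [ε]))
    ⟨x, hx.le⟩
  have hanti : Antitone fun k => {x | F x ≤ m + ε k} :=
    fun k l hkl x (hx : F x ≤ m + ε l) =>
      hx.trans (add_le_add_right (ENNReal.inv_le_inv.2 (Nat.cast_le.2 (by omega))) m)
  obtain ⟨x, hx⟩ := exists_mem_iInter_of_antitone_convex hanti hne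
    (fun k => hlsc.isClosed_preimage _) (fun k => hF.convex_setOf_le _)
    (hbdd _ (by simp [ε, hm]))
  have hxm : F x ≤ m :=
    ge_of_tendsto' (by simpa using tendsto_const_nhds.add hε) fun k => mem_iInter.1 hx k
  exact ⟨x, fun z => hxm.trans (iInf_le F z)⟩

end Hilbert

lemma isBounded_of_isBounded_image_of_infDist_le {X Y : Type*} [NormedAddCommGroup X]
    [NormedSpace ℝ X] [NormedAddCommGroup Y] [NormedSpace ℝ Y] (T : X →L[ℝ] Y)
    (N : Submodule ℝ X) [FiniteDimensional ℝ N] (hker : LinearMap.ker (T : X →ₗ[ℝ] Y) ⊓ N = ⊥)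
    {s : Set X} {R : ℝ} (hR : ∀ x ∈ s, infDist x N ≤ R) (hs : IsBounded (T '' s)) :
    IsBounded s := by
  have hinj : LinearMap.ker ((T : X →ₗ[ℝ] Y) ∘ₗ N.subtype) = ⊥ := by
    rw [LinearMap.ker_eq_bot']
    intro n hn
    have : (n : X) ∈ LinearMap.ker (T : X →ₗ[ℝ] Y) ⊓ N := ⟨hn, n.2⟩
    simpa [hker] using this
  obtain ⟨K, -, hK⟩ := ((T : X →ₗ[ℝ] Y) ∘ₗ N.subtype).exists_antilipschitzWith hinj
  obtain ⟨B, hB⟩ := hs.exists_norm_le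
  refine isBounded_iff_forall_norm_le.2 ⟨(R + 1) + K * (B + ‖T‖ * (R + 1)), fun x hx => ?_⟩
  obtain ⟨n, hn, hxn⟩ :=
    (infDist_lt_iff ⟨0, N.zero_mem⟩).1 ((hR x hx).trans_lt (lt_add_one R))
  rw [dist_eq_norm] at hxn
  have hTn : ‖T n‖ ≤ B + ‖T‖ * (R + 1) :=
    calc ‖T n‖ = ‖T x - T (x - n)‖ := by simp
      _ ≤ ‖T x‖ + ‖T‖ * ‖x - n‖ := (norm_sub_le _ _).trans (by gcongr; exact T.le_opNorm _)
      _ ≤ B + ‖T‖ * (R + 1) := add_le_add (hB _ (mem_image_of_mem T hx)) (by gcongr)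
  have hn' : ‖n‖ ≤ K * ‖T n‖ := by simpa using hK.le_mul_dist ⟨n, hn⟩ 0
  calc ‖x‖ ≤ ‖x - n‖ + ‖n‖ := norm_le_norm_sub_add x n
    _ ≤ (R + 1) + K * (B + ‖T‖ * (R + 1)) := by gcongr; exact hn'.trans (by gcongr)

section Tikhonov

variable {X Y : Type*} [NormedAddCommGroup X] [NormedSpace ℝ X] [NormedAddCommGroup Y]
  [NormedSpace ℝ Y] (T : X →L[ℝ] Y) (y : Y) (α : ℝ) (J : X → ℝ≥0∞)

noncomputable def tikhonovFunctional (x : X) : ℝ≥0∞ :=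
  ENNReal.ofReal ((1 / 2) * ‖T x - y‖ ^ 2) + ENNReal.ofReal α * J x

lemma convexOn_half_norm_sub_sq : ConvexOn ℝ univ fun x => (1 / 2 : ℝ) * ‖T x - y‖ ^ 2 := by
  have h := ((convexOn_univ_norm.translate_left (-y)).comp_linearMap (T : X →ₗ[ℝ] Y)).pow
    (fun _ _ => norm_nonneg _) 2 |>.smul (c := (1 / 2 : ℝ)) (by norm_num)
  simpa [sub_eq_add_neg] using h

variable {J}

lemma convexENNReal_tikhonovFunctional (hJ : ConvexENNReal J) :
    ConvexENNReal (tikhonovFunctional T y α J) :=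
  (convexOn_half_norm_sub_sq T y).convexENNReal_ofReal.add (hJ.const_mul _)

lemma lowerSemicontinuous_tikhonovFunctional (hJ : LowerSemicontinuous J) :
    LowerSemicontinuous (tikhonovFunctional T y α J) := by
  have hdata : Continuous fun x => ENNReal.ofReal ((1 / 2) * ‖T x - y‖ ^ 2) :=
    ENNReal.continuous_ofReal.comp (by fun_prop)
  exact hdata.lowerSemicontinuous.add <| (ENNReal.continuous_const_mul ENNReal.ofReal_ne_top
    ).comp_lowerSemicontinuous hJ fun _ _ h => mul_le_mul_right h _

lemma isBounded_setOf_tikhonovFunctional_le (hα : 0 < α) (N : Submodule ℝ X)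
    [FiniteDimensional ℝ N] (hcoercive : ∀ M : ℝ≥0∞, M ≠ ⊤ → ∃ R : ℝ,
      ∀ x : X, R ≤ infDist x (N : Set X) → M ≤ J x)
    (hker : LinearMap.ker (T : X →ₗ[ℝ] Y) ⊓ N = ⊥) {c : ℝ≥0∞} (hc : c ≠ ⊤) :
    IsBounded {x | tikhonovFunctional T y α J x ≤ c} := by
  have hα' : ENNReal.ofReal α ≠ 0 := ENNReal.ofReal_pos.2 hα |>.ne'
  obtain ⟨R, hR⟩ := hcoercive (c / ENNReal.ofReal α + 1) (by finiteness)
  refine isBounded_of_isBounded_image_of_infDist_le T N hker (R := R) (fun x hx => ?_) ?_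
  · have hJx : J x ≤ c / ENNReal.ofReal α :=
      ENNReal.le_div_iff_mul_le (.inl hα') (.inl ENNReal.ofReal_ne_top) |>.2 <| by
        rw [mul_comm]; exact le_add_self.trans hx
    by_contra! hfar
    exact (ENNReal.lt_add_right (by finiteness) one_ne_zero).not_ge
      ((hR x hfar.le).trans hJx)
  · refine isBounded_closedBall (x := y) (r := √(2 * c.toReal)) |>.subset ?_
    rintro _ ⟨x, hx, rfl⟩
    have hdata : (1 / 2) * ‖T x - y‖ ^ 2 ≤ c.toReal :=
      (ENNReal.ofReal_le_iff_le_toReal hc).1 (le_self_add.trans hx)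
    rw [mem_closedBall, dist_eq_norm]
    exact Real.le_sqrt_of_sq_le (by linarith)

end Tikhonov

theorem existence_of_minimizers_projected_variational_general
    {X Y : Type*} [NormedAddCommGroup X] [InnerProductSpace ℝ X] [CompleteSpace X]
    [NormedAddCommGroup Y] [InnerProductSpace ℝ Y]
    (T : X →L[ℝ] Y) (y : Y) (α : ℝ) (hα : 0 < α)
    (J : X → ℝ≥0∞)
    (hproper : ∃ x, J x ≠ ⊤)
    (hconv : ∀ x z : X, ∀ a b : ℝ, 0 ≤ a → 0 ≤ b → a + b = 1 →
      J (a • x + b • z) ≤ ENNReal.ofReal a * J x + ENNReal.ofReal b * J z)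
    (hlsc : LowerSemicontinuous J)
    (N : Submodule ℝ X) [FiniteDimensional ℝ N]
    (hcoercive : ∀ M : ℝ≥0∞, M ≠ ⊤ → ∃ R : ℝ,
      ∀ x : X, R ≤ Metric.infDist x (N : Set X) → M ≤ J x)
    (hker : LinearMap.ker (T : X →ₗ[ℝ] Y) ⊓ N = ⊥) :
    ∃ xmin : X, ∀ x : X,
      ENNReal.ofReal ((1 / 2) * ‖T xmin - y‖ ^ 2) + ENNReal.ofReal α * J xmin ≤
      ENNReal.ofReal ((1 / 2) * ‖T x - y‖ ^ 2) + ENNReal.ofReal α * J x := by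
  obtain ⟨x₀, hx₀⟩ := hproper
  exact ConvexENNReal.exists_forall_le (convexENNReal_tikhonovFunctional T y α hconv)
    (lowerSemicontinuous_tikhonovFunctional T y α hlsc)
    (fun c hc => isBounded_setOf_tikhonovFunctional_le T y α hα N hcoercive hker hc)
    ⟨x₀, by finiteness⟩

/-- Existence of minimizers for `x ↦ ½‖Tx - y‖² + α J x` when `J : X → [0,+∞]` is proper, convex,
lower semicontinuous, absolutely `p`-homogeneous, has finite-dimensional kernel `N`, is coercive
on the quotient `X/N`, and `ker T ∩ N = {0}`. -/
theorem existence_of_minimizers_projected_variational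
    {X Y : Type*} [NormedAddCommGroup X] [InnerProductSpace ℝ X] [CompleteSpace X]
    [NormedAddCommGroup Y] [InnerProductSpace ℝ Y] [CompleteSpace Y]
    (T : X →L[ℝ] Y) (y : Y) (α : ℝ) (hα : 0 < α)
    (J : X → ℝ≥0∞)
    (hproper : ∃ x, J x ≠ ⊤)
    (hconv : ∀ x z : X, ∀ a b : ℝ, 0 ≤ a → 0 ≤ b → a + b = 1 →
      J (a • x + b • z) ≤ ENNReal.ofReal a * J x + ENNReal.ofReal b * J z)
    (hlsc : LowerSemicontinuous J)
    (p : ℝ) (hp : 1 ≤ p)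
    (hhom : ∀ (c : ℝ) (x : X), J (c • x) = ENNReal.ofReal (|c| ^ p) * J x)
    (N : Submodule ℝ X) [FiniteDimensional ℝ N]
    (hN : (N : Set X) = {x : X | J x = 0})
    (hcoercive : ∀ M : ℝ≥0∞, M ≠ ⊤ → ∃ R : ℝ,
      ∀ x : X, R ≤ Metric.infDist x (N : Set X) → M ≤ J x)
    (hker : LinearMap.ker (T : X →ₗ[ℝ] Y) ⊓ N = ⊥) :
    ∃ xmin : X, ∀ x : X,
      ENNReal.ofReal ((1 / 2) * ‖T xmin - y‖ ^ 2) + ENNReal.ofReal α * J xmin ≤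
      ENNReal.ofReal ((1 / 2) * ‖T x - y‖ ^ 2) + ENNReal.ofReal α * J x :=
  existence_of_minimizers_projected_variational_general T y α hα J hproper hconv hlsc N hcoercive
    hker
end
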